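/- arXiv:1508.01568 — 6 statements merged into one kernel-verified Lean document; each statement's English description precedes it below -/
import Mathlib

section
/- For any class K of B-valued functions on A, FSC(CSF(K)) = Lo(VS(K)): the Galois closure of a function class equals the local closure of its closure under simple variable substitutions. -/
/-- A `B`-valued function on `A` of some positive arity `n`. -/
abbrev Func (A B : Type*) := Σ n : ℕ+, (Fin n → A) → B

/-- An `A`-to-`B` relational constraint of some positive arity `m`. -/
abbrev Constr (A B : Type*) := Σ m : ℕ+, Set (Fin m → A) × Set (Fin m → B)

/-- `f : Aⁿ → B` satisfies the constraint `(R, S)` if applying `f`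
componentwise to any `n`-tuple of elements of `R` yields an element of `S`. -/
def Satisfies {A B : Type*} {n m : ℕ+} (f : (Fin n → A) → B)
    (C : Set (Fin m → A) × Set (Fin m → B)) : Prop :=
  ∀ a : Fin n → (Fin m → A), (∀ i, a i ∈ C.1) →
    (fun j => f fun i => a i j) ∈ C.2

/-- The class of all functions satisfying every constraint in `T`. -/
def FSC {A B : Type*} (T : Set (Constr A B)) : Set (Func A B) :=
  {f | ∀ C ∈ T, Satisfies f.2 C.2}

/-- The set of all constraints satisfied by every function in `K`. -/
def CSF {A B : Type*} (K : Set (Func A B)) : Set (Constr A B) :=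
  {C | ∀ f ∈ K, Satisfies f.2 C.2}

/-- `VS K = K ∘ O_A`: the closure of `K` under simple variable substitutions,
i.e. all compositions of members of `K` with tuples of projections on `A`.
An `m`-ary projection `a ↦ a (p i)` is encoded by the index map `p`. -/
def VS {A B : Type*} (K : Set (Func A B)) : Set (Func A B) :=
  {g | ∃ (n m : ℕ+) (f : (Fin n → A) → B) (p : Fin n → Fin m),
    ⟨n, f⟩ ∈ K ∧ g = ⟨m, fun a => f fun i => a (p i)⟩}

/-- The local closure `Lo K`: all functions each of whose restrictions to a
finite subset of its domain agrees with some member of `K` of the same arity. -/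
def Lo {A B : Type*} (K : Set (Func A B)) : Set (Func A B) :=
  {f | ∀ F : Finset (Fin f.1 → A), ∃ g : (Fin f.1 → A) → B,
    ⟨f.1, g⟩ ∈ K ∧ ∀ a ∈ F, f.2 a = g a}

/-- Factorization of the Galois closure on function classes:
`FSC (CSF K) = Lo (VS K)`. -/
theorem FSC_CSF_eq_Lo_VS {A B : Type*} [Nonempty A] [Nonempty B]
    (K : Set (Func A B)) :
    FSC (CSF K) = Lo (VS K) := by
  classical
  ext f
  obtain ⟨n, f⟩ := f
  constructor
  · -- FSC (CSF K) ⊆ Lo (VS K)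
    intro hf F
    set l : List (Fin n → A) := F.toList with hl
    set m : ℕ+ := ⟨l.length + 1, Nat.succ_pos _⟩ with hm
    set e : Fin m → (Fin n → A) := fun j => l.getD j (Classical.arbitrary _) with he
    set R : Set (Fin m → A) := Set.range (fun i : Fin n => fun j => e j i) with hR
    set S : Set (Fin m → B) :=
      {s | ∃ g : (Fin n → A) → B, (⟨n, g⟩ : Func A B) ∈ VS K ∧ s = fun j => g (e j)}
      with hS
    have hC : (⟨m, (R, S)⟩ : Constr A B) ∈ CSF K := by
      rintro ⟨n', h⟩ hh a ha
      choose p hp using ha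
      refine ⟨fun x => h fun i => x (p i), ⟨n', n, h, p, hh, rfl⟩, ?_⟩
      funext j
      simp only
      congr 1
      funext i
      rw [← hp i]
    have key := hf _ hC (fun i j => e j i) (fun i => ⟨i, rfl⟩)
    obtain ⟨g, hg, hfg⟩ := key
    refine ⟨g, hg, ?_⟩
    intro a haF
    have : ∃ j : Fin m, e j = a := by
      have hal : a ∈ l := Finset.mem_toList.mpr haF
      obtain ⟨j, hj, hj2⟩ := List.mem_iff_getElem.mp hal
      refine ⟨⟨j, Nat.lt_succ_of_lt hj⟩, ?_⟩
      show l.getD j _ = a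
      rw [List.getD_eq_getElem l _ hj, hj2]
    obtain ⟨j, rfl⟩ := this
    exact congrFun hfg j
  · -- Lo (VS K) ⊆ FSC (CSF K)
    intro hf C hC
    obtain ⟨m, R, S⟩ := C
    intro a ha
    obtain ⟨g, hg, hagree⟩ :=
      hf (Finset.image (fun j : Fin m => fun i => a i j) Finset.univ)
    obtain ⟨n', m', h, p, hh, heq⟩ := hg
    obtain ⟨h1, h2⟩ := Sigma.mk.inj_iff.mp heq
    subst h1
    have hgdef : g = fun x => h fun i => x (p i) := eq_of_heq h2
    have hhC := hC ⟨n', h⟩ hh (fun i => a (p i)) (fun i => ha (p i))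
    have : (fun j => f fun i => a i j) = (fun j => h fun i => a (p i) j) := by
      funext j
      have h1 : f (fun i => a i j) = g (fun i => a i j) :=
        hagree _ (Finset.mem_image.mpr ⟨j, Finset.mem_univ _, rfl⟩)
      rw [h1, hgdef]
    rw [this]
    exact hhC
end

section
/- For any class Kₙ of n-ary B-valued functions on A, B^(Aⁿ) ∩ Lo(VS(Kₙ)) = Lo(VSₙ(Kₙ)): the n-ary part of the local closure of the variable-substitution closure of Kₙ equals the local closure of the n-ary variable-substitution closure of Kₙ. -/
/-- The closure of a class of `n`-ary functions under `n`-ary simple variable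
substitutions: `VSn n Kₙ = B^(Aⁿ) ∩ VS Kₙ`, i.e. all `n`-ary functions
obtained from members of `Kₙ` by substituting `n`-ary projections. -/
def VSn {A B : Type*} (n : ℕ+) (K : Set ((Fin n → A) → B)) :
    Set ((Fin n → A) → B) :=
  {g | ∃ f ∈ K, ∃ p : Fin n → Fin n, g = fun a => f fun i => a (p i)}

/-- Local closure of a class of `n`-ary functions: all `n`-ary functions whose
restriction to each finite subset of the domain agrees with a member of `K`. -/
def LoFix {A B : Type*} (n : ℕ+) (K : Set ((Fin n → A) → B)) :
    Set ((Fin n → A) → B) :=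
  {f | ∀ F : Finset (Fin n → A), ∃ g ∈ K, ∀ a ∈ F, f a = g a}

/-- The `n`-ary part of `Lo (VS Kₙ)` equals `LoFix (VSn Kₙ)`, where a class
`Kₙ` of `n`-ary functions is viewed inside the class of all functions. -/
theorem nary_Lo_VS_eq_LoFix_VSn {A B : Type*} [Nonempty A] [Nonempty B]
    (n : ℕ+) (Kn : Set ((Fin n → A) → B)) :
    {f : (Fin n → A) → B |
      (⟨n, f⟩ : Func A B) ∈ Lo (VS ((fun f => (⟨n, f⟩ : Func A B)) '' Kn))}
      = LoFix n (VSn n Kn) := by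
  ext f
  simp only [Set.mem_setOf_eq, Lo, LoFix, VS, VSn]
  constructor
  · intro h F
    obtain ⟨g, ⟨n', m, f', p, hf', hg⟩, hagree⟩ := h F
    obtain ⟨f₀, hf₀, hf'eq⟩ := hf'
    obtain ⟨hm, hgeq⟩ := Sigma.mk.inj_iff.mp hg
    subst hm
    obtain ⟨hn, hfeq⟩ := Sigma.mk.inj_iff.mp hf'eq
    subst hn
    obtain rfl := eq_of_heq hfeq
    exact ⟨g, ⟨f₀, hf₀, p, eq_of_heq hgeq⟩, hagree⟩
  · intro h F
    obtain ⟨g, ⟨f₀, hf₀, p, rfl⟩, hagree⟩ := h F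
    exact ⟨_, ⟨n, n, f₀, p, ⟨f₀, hf₀, rfl⟩, rfl⟩, hagree⟩
end

section
/- If Kₙ is a class of n-ary B-valued functions on A with VSₙ(Kₙ) = Kₙ, then VSₙ(Lo(Kₙ)) = Lo(Kₙ). -/
/-- If `Kₙ` is closed under `n`-ary simple variable substitutions, then so is
its local closure. -/
theorem VSn_LoFix_of_VSn_closed {A B : Type*} [Nonempty A] [Nonempty B]
    (n : ℕ+) (Kn : Set ((Fin n → A) → B)) (h : VSn n Kn = Kn) :
    VSn n (LoFix n Kn) = LoFix n Kn := by
  ext g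
  constructor
  · rintro ⟨f, hf, p, rfl⟩ F
    classical
    obtain ⟨g', hg', hagree⟩ := hf (F.image (fun a i => a (p i)))
    refine ⟨fun a => g' fun i => a (p i), ?_, ?_⟩
    · rw [← h]; exact ⟨g', hg', p, rfl⟩
    · intro a ha
      exact hagree _ (Finset.mem_image_of_mem _ ha)
  · intro hg
    exact ⟨g, hg, id, rfl⟩
end

section
/- A class K of unary B-valued functions on A is definable within B^A by some set of A-to-B constraints if and only if K is locally closed. -/
/-- A unary function `f : A → B` satisfies an `m`-ary constraint `(R, S)` if
`f ∘ a ∈ S` for every `a ∈ R`. -/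
def Satisfies1 {A B : Type*} {m : ℕ+} (f : A → B)
    (C : Set (Fin m → A) × Set (Fin m → B)) : Prop :=
  ∀ a ∈ C.1, (fun i => f (a i)) ∈ C.2

/-- A class of unary `B`-valued functions on `A` is definable within `B^A` by
some set of `A`-to-`B` constraints iff it is locally closed. -/
theorem unary_definable_iff_locally_closed {A B : Type*}
    [Nonempty A] [Nonempty B] (K : Set (A → B)) :
    (∃ T : Set (Constr A B), K = {f : A → B | ∀ C ∈ T, Satisfies1 f C.2}) ↔
    (∀ f : A → B, (∀ F : Finset A, ∃ g ∈ K, ∀ a ∈ F, f a = g a) → f ∈ K) := by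
  classical
  constructor
  · rintro ⟨T, rfl⟩ f hf C hC a ha
    obtain ⟨g, hg, hfg⟩ := hf (Finset.image a Finset.univ)
    have : (fun i => f (a i)) = fun i => g (a i) := by
      funext i
      exact hfg (a i) (Finset.mem_image_of_mem a (Finset.mem_univ i))
    rw [this]
    exact hg C hC a ha
  · intro hK
    refine ⟨{C | ∀ g ∈ K, Satisfies1 g C.2}, ?_⟩
    ext f
    simp only [Set.mem_setOf_eq]
    constructor
    · intro hf C hC; exact hC f hf
    · intro hf
      apply hK
      intro F
      set a : Fin (F.card + 1) → A := fun i =>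
        if h : (i : ℕ) < F.card then (F.equivFin.symm ⟨i, h⟩ : A)
        else Classical.arbitrary A with ha
      have key := hf ⟨⟨F.card + 1, Nat.succ_pos _⟩,
          ({a}, {h | ∃ g ∈ K, h = fun i => g (a i)})⟩
        (fun g hg a' ha' => by
          simp only [Set.mem_singleton_iff] at ha'
          subst ha'
          exact ⟨g, hg, rfl⟩)
        a rfl
      obtain ⟨g, hg, hfa⟩ := key
      refine ⟨g, hg, fun b hb => ?_⟩
      have hlt : ((F.equivFin ⟨b, hb⟩ : Fin F.card) : ℕ) < F.card :=
        (F.equivFin ⟨b, hb⟩).isLt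
      have hb' : b = a ⟨(F.equivFin ⟨b, hb⟩ : ℕ), Nat.lt_succ_of_lt hlt⟩ := by
        simp [ha, hlt]
      rw [hb']
      exact congrFun hfa _
end

section
/- Transitivity of conjunctive minors: if a constraint (R,S) is a conjunctive minor of a nonempty family (Rⱼ,Sⱼ)_{j∈J} of A-to-B constraints, and for each j ∈ J, (Rⱼ,Sⱼ) is a conjunctive minor of a nonempty family (Rⱼⁱ,Sⱼⁱ)_{i∈Iⱼ}, then (R,S) is a conjunctive minor of the combined family (Rⱼⁱ,Sⱼⁱ)_{j∈J, i∈Iⱼ}. -/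
/-- `(R, S)` is a conjunctive minor of the family `(Rⱼ, Sⱼ)_{j∈J}`: there is a
minor formation scheme `h = (hⱼ : Fin nⱼ → Fin m ⊕ V)` such that `R` is a
restrictive conjunctive minor of `(Rⱼ)` via `h` (every `a ∈ R` admits a Skolem
map `σ`) and `S` is an extensive conjunctive minor of `(Sⱼ)` via `h`. -/
def ConjMinor {A B : Type*} {J : Type*} (m : ℕ+)
    (R : Set (Fin m → A)) (S : Set (Fin m → B)) (n : J → ℕ+)
    (Rj : ∀ j, Set (Fin (n j) → A)) (Sj : ∀ j, Set (Fin (n j) → B)) : Prop :=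
  ∃ (V : Type) (h : ∀ j, Fin (n j) → (Fin m ⊕ V)),
    (∀ a ∈ R, ∃ σ : V → A, ∀ j, (Sum.elim a σ ∘ h j) ∈ Rj j) ∧
    (∀ b : Fin m → B, (∃ τ : V → B, ∀ j, (Sum.elim b τ ∘ h j) ∈ Sj j) → b ∈ S)

theorem sum_elim_map_aux {α V W C : Type*} (a : α → C) (σ : V → C) (σ' : W → C)
    (e : α ⊕ V) :
    Sum.elim a (Sum.elim σ σ') (Sum.map id Sum.inl e) = Sum.elim a σ e := by
  cases e <;> rfl

theorem sum_elim_map_aux' {α V W C : Type*} (b : α → C) (τ : V ⊕ W → C)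
    (e : α ⊕ V) :
    Sum.elim b (fun v => τ (Sum.inl v)) e = Sum.elim b τ (Sum.map id Sum.inl e) := by
  cases e <;> rfl

/-- Transitivity of conjunctive minors: if `(R,S)` is a conjunctive minor of a
nonempty family `(Rⱼ,Sⱼ)_{j∈J}` and each `(Rⱼ,Sⱼ)` is a conjunctive minor of a
nonempty family `(Rⱼⁱ,Sⱼⁱ)_{i∈Iⱼ}`, then `(R,S)` is a conjunctive minor of the
combined family `(Rⱼⁱ,Sⱼⁱ)_{j∈J, i∈Iⱼ}`. -/
theorem conjMinor_trans {A B : Type*} [Nonempty A] [Nonempty B]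
    {J : Type} [Nonempty J] {I : J → Type} [∀ j, Nonempty (I j)]
    (m : ℕ+) (R : Set (Fin m → A)) (S : Set (Fin m → B)) (n : J → ℕ+)
    (Rj : ∀ j, Set (Fin (n j) → A)) (Sj : ∀ j, Set (Fin (n j) → B))
    (k : ∀ j, I j → ℕ+)
    (Rji : ∀ j i, Set (Fin (k j i) → A)) (Sji : ∀ j i, Set (Fin (k j i) → B))
    (h1 : ConjMinor m R S n Rj Sj)
    (h2 : ∀ j, ConjMinor (n j) (Rj j) (Sj j) (k j) (Rji j) (Sji j)) :
    ConjMinor m R S (fun p : Σ j, I j => k p.1 p.2)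
      (fun p => Rji p.1 p.2) (fun p => Sji p.1 p.2) := by

  obtain ⟨V, h, hR, hS⟩ := h1
  choose W g hRj hSj using h2
  refine ⟨V ⊕ Σ j, W j,
    fun p t => Sum.elim (fun s => (h p.1 s).map id Sum.inl)
      (fun w => Sum.inr (Sum.inr ⟨p.1, w⟩)) (g p.1 p.2 t), ?_, ?_⟩
  · intro a ha
    obtain ⟨σ, hσ⟩ := hR a ha
    choose σ' hσ' using fun j => hRj j _ (hσ j)
    refine ⟨Sum.elim σ (fun q => σ' q.1 q.2), fun p => ?_⟩
    have := hσ' p.1 p.2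
    convert this using 1
    funext t
    simp only [Function.comp_apply]
    rcases g p.1 p.2 t with s | w
    · exact sum_elim_map_aux _ _ _ _
    · simp
  · rintro b ⟨τ, hτ⟩
    refine hS b ⟨fun v => τ (Sum.inl v), fun j => ?_⟩
    refine hSj j _ ⟨fun w => τ (Sum.inr ⟨j, w⟩), fun i => ?_⟩
    have := hτ ⟨j, i⟩
    convert this using 1
    funext t
    simp only [Function.comp_apply]
    rcases g j i t with s | w
    · exact sum_elim_map_aux' _ _ _
    · simp
end

section
/- If a function f : (Fin n → A) → B satisfies every constraint in a nonempty family (Rⱼ,Sⱼ)_{j∈J}, and (R,S) is a conjunctive minor of this family, then f satisfies (R,S). -/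
/-- If `f` satisfies every constraint of a nonempty family `(Rⱼ,Sⱼ)_{j∈J}`
and `(R,S)` is a conjunctive minor of this family, then `f` satisfies
`(R,S)`. -/
theorem satisfies_conjMinor {A B : Type*} [Nonempty A] [Nonempty B]
    {J : Type} [Nonempty J] {nf : ℕ+} (f : (Fin nf → A) → B)
    (m : ℕ+) (R : Set (Fin m → A)) (S : Set (Fin m → B)) (n : J → ℕ+)
    (Rj : ∀ j, Set (Fin (n j) → A)) (Sj : ∀ j, Set (Fin (n j) → B))
    (hf : ∀ j, Satisfies f (Rj j, Sj j))
    (hm : ConjMinor m R S n Rj Sj) :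
    Satisfies f (R, S) := by
  obtain ⟨V, h, hR, hS⟩ := hm
  intro a ha
  choose σ hσ using fun i => hR (a i) (ha i)
  apply hS
  refine ⟨fun v => f fun i => σ i v, fun j => ?_⟩
  have := hf j (fun i => Sum.elim (a i) (σ i) ∘ h j) (fun i => hσ i j)
  convert this using 1
  funext k
  simp only [Function.comp]
  cases h j k <;> rfl
end
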